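/- Let f : ℝⁿ → ℝ be convex and μ-smooth, λ > 0, S a d×m matrix, z* and y* the plain and sketched dual solutions with Δ := y* - z*, and suppose λ ≥ 2μZ_f² where Z_f = sup{‖P_S^⊥AᵀΔ'‖ : Δ' ∈ T_{z*} ∩ B₂ⁿ}. Then (λ/(2μ))‖Δ‖² + ‖AᵀΔ‖² ≤ ‖P_S^⊥AᵀΔ‖·‖P_S^⊥Aᵀz*‖, and consequently √(2λ/μ)·‖AᵀΔ‖ ≤ Z_f·‖P_S^⊥Aᵀz*‖. -/

import Mathlib

open scoped RealInnerProductSpace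
open Matrix MeasureTheory ProbabilityTheory

noncomputable section

abbrev EuclR (n : ℕ) := EuclideanSpace ℝ (Fin n)

def matVec {p q : ℕ} (M : Matrix (Fin p) (Fin q) ℝ) (x : EuclR q) : EuclR p :=
  Matrix.toEuclideanLin M x

def matCLM {p q : ℕ} (M : Matrix (Fin p) (Fin q) ℝ) : EuclR q →L[ℝ] EuclR p :=
  LinearMap.toContinuousLinearMap (Matrix.toEuclideanLin M)

def ranM {p q : ℕ} (M : Matrix (Fin p) (Fin q) ℝ) : Submodule ℝ (EuclR p) :=
  LinearMap.range (Matrix.toEuclideanLin M)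

def projOn {p : ℕ} (K : Submodule ℝ (EuclR p)) (x : EuclR p) : EuclR p :=
  (Submodule.orthogonalProjection K x : EuclR p)

def perpCLM {p : ℕ} (K : Submodule ℝ (EuclR p)) : EuclR p →L[ℝ] EuclR p :=
  ContinuousLinearMap.id ℝ (EuclR p) - K.subtypeL.comp (Submodule.orthogonalProjection K)

def fconj {p : ℕ} (f : EuclR p → ℝ) (z : EuclR p) : EReal :=
  ⨆ w : EuclR p, ((⟪w, z⟫ - f w : ℝ) : EReal)

def fdom {p : ℕ} (f : EuclR p → ℝ) : Set (EuclR p) := {z | fconj f z ≠ ⊤}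

def tcone {p : ℕ} (f : EuclR p → ℝ) (z : EuclR p) : Set (EuclR p) :=
  {Δ | ∃ t : ℝ, 0 ≤ t ∧ ∃ y ∈ fdom f, Δ = t • (y - z)}

def ZfVal {n d m : ℕ} (f : EuclR n → ℝ) (zs : EuclR n)
    (A : Matrix (Fin n) (Fin d) ℝ) (S : Matrix (Fin d) (Fin m) ℝ) : ℝ :=
  sSup ((fun Δ => ‖matVec Aᵀ Δ - projOn (ranM S) (matVec Aᵀ Δ)‖) ''
    (tcone f zs ∩ Metric.closedBall 0 1))

/-!
Rather than through subgradients, the argument compares objective values. As ∇f is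
μ-Lipschitz, f (w + v) ≤ f w + ⟪∇f w, v⟫ + μ/2 ‖v‖², which makes f* (1/μ)-strongly convex.
So the plain dual objective f* + ‖Aᵀ·‖²/(2λ) exceeds its minimum f*(z*) + ‖Aᵀz*‖²/(2λ) at y* by at
least ‖Δ‖²/(2μ) + ‖AᵀΔ‖²/(2λ), and symmetrically for the sketched objective with P_S Aᵀ in place of
Aᵀ. Adding the two margins, ‖u‖² - ‖P_S u‖² = ‖P_S^⊥ u‖² leaves
  ‖Δ‖²/μ + (‖AᵀΔ‖² + ‖P_S AᵀΔ‖²)/(2λ) ≤ (‖P_S^⊥ Aᵀy*‖² - ‖P_S^⊥ Aᵀz*‖²)/(2λ),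
and Cauchy–Schwarz with ‖P_S^⊥ AᵀΔ‖ ≤ Z_f ‖Δ‖ ≤ √(λ/(2μ)) ‖Δ‖ (Δ/‖Δ‖ lies in the tangent cone)
gives the first inequality; AM–GM turns it into the second.
-/

open Set

section Smooth
variable {E : Type*} [NormedAddCommGroup E] [InnerProductSpace ℝ E] [CompleteSpace E]
  {f : E → ℝ} {g : E → E}

theorem HasGradientAt.hasDerivAt_comp_line {g₀ x v : E} {t : ℝ}
    (h : HasGradientAt f g₀ (x + t • v)) :
    HasDerivAt (fun s : ℝ => f (x + s • v)) ⟪g₀, v⟫ t := by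
  have hline : HasDerivAt (fun s : ℝ => x + s • v) v t := by
    simpa using ((hasDerivAt_id t).smul_const v).const_add x
  simpa [Function.comp_def] using h.hasFDerivAt.comp_hasDerivAt t hline

theorem ConvexOn.add_inner_gradient_le (hf : ConvexOn ℝ univ f)
    (hg : ∀ y, HasGradientAt f (g y) y) (x w : E) :
    f x + ⟪g x, w - x⟫ ≤ f w := by
  have hline : ConvexOn ℝ univ (fun s : ℝ => f (x + s • (w - x))) := by
    simpa [Function.comp_def, AffineMap.lineMap_apply_module', add_comm] using
      hf.comp_affineMap (AffineMap.lineMap x w : ℝ →ᵃ[ℝ] E)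
  have hderiv : HasDerivAt (fun s : ℝ => f (x + s • (w - x))) ⟪g x, w - x⟫ 0 :=
    HasGradientAt.hasDerivAt_comp_line (by simpa using hg x)
  have := hline.le_slope_of_hasDerivAt (mem_univ 0) (mem_univ 1) one_pos hderiv
  simp only [slope_def_field] at this
  norm_num at this
  linarith

theorem apply_add_le_of_lipschitz_gradient {μ : ℝ} (hg : ∀ y, HasGradientAt f (g y) y)
    (hlip : ∀ x y, ‖g y - g x‖ ≤ μ * ‖y - x‖) (x v : E) :
    f (x + v) ≤ f x + ⟪g x, v⟫ + μ / 2 * ‖v‖ ^ 2 := by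
  set φ : ℝ → ℝ := fun s => f (x + s • v) - s * ⟪g x, v⟫ - μ / 2 * s ^ 2 * ‖v‖ ^ 2
  have hderiv : ∀ s, HasDerivAt φ (⟪g (x + s • v) - g x, v⟫ - μ * s * ‖v‖ ^ 2) s := by
    intro s
    have h1 := HasGradientAt.hasDerivAt_comp_line (hg (x + s • v))
    have h2 : HasDerivAt (fun s : ℝ => μ / 2 * s ^ 2 * ‖v‖ ^ 2) (μ * s * ‖v‖ ^ 2) s :=
      (((hasDerivAt_pow 2 s).const_mul (μ / 2)).mul_const (‖v‖ ^ 2)).congr_deriv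
        (by push_cast; ring)
    exact ((h1.sub ((hasDerivAt_id s).mul_const ⟪g x, v⟫)).sub h2).congr_deriv
      (by rw [inner_sub_left]; ring)
  have hanti : AntitoneOn φ (Ici 0) := by
    refine antitoneOn_of_hasDerivWithinAt_nonpos (convex_Ici 0)
      (fun s _ => (hderiv s).continuousAt.continuousWithinAt)
      (fun s _ => (hderiv s).hasDerivWithinAt) fun s hs => ?_
    have hs : 0 ≤ s := le_of_lt (by rwa [interior_Ici] at hs)
    calc ⟪g (x + s • v) - g x, v⟫ - μ * s * ‖v‖ ^ 2
        ≤ ‖g (x + s • v) - g x‖ * ‖v‖ - μ * s * ‖v‖ ^ 2 := by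
          gcongr; exact real_inner_le_norm _ _
      _ ≤ μ * (s * ‖v‖) * ‖v‖ - μ * s * ‖v‖ ^ 2 := by
          gcongr
          simpa [norm_smul, abs_of_nonneg hs] using hlip x (x + s • v)
      _ = 0 := by ring
  have := hanti self_mem_Ici (mem_Ici.2 zero_le_one) zero_le_one
  simp only [φ] at this
  norm_num at this
  linarith

end Smooth

theorem inner_sub_add_le_of_quadratic_upper_bound {E : Type*} [NormedAddCommGroup E]
    [InnerProductSpace ℝ E] {f : E → ℝ} {g : E → E} {μ : ℝ} (hμ : 0 < μ)
    (hdesc : ∀ x v, f (x + v) ≤ f x + ⟪g x, v⟫ + μ / 2 * ‖v‖ ^ 2)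
    {t : ℝ} (ht₀ : 0 ≤ t) (ht₁ : t ≤ 1) (z₁ z₂ w : E) :
    ⟪w, t • z₁ + (1 - t) • z₂⟫ - f w + t * (1 - t) / (2 * μ) * ‖z₁ - z₂‖ ^ 2
      ≤ t * (⟪w + ((1 - t) / μ) • (z₁ - z₂), z₁⟫ - f (w + ((1 - t) / μ) • (z₁ - z₂)))
        + (1 - t) * (⟪w + (-(t / μ)) • (z₁ - z₂), z₂⟫ - f (w + (-(t / μ)) • (z₁ - z₂))) := by
  have h₁ := mul_le_mul_of_nonneg_left (hdesc w (((1 - t) / μ) • (z₁ - z₂))) ht₀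
  have h₂ := mul_le_mul_of_nonneg_left (hdesc w ((-(t / μ)) • (z₁ - z₂))) (sub_nonneg.2 ht₁)
  have hd : ‖z₁ - z₂‖ ^ 2 = ⟪z₁ - z₂, z₁⟫ - ⟪z₁ - z₂, z₂⟫ := by
    rw [← inner_sub_right, real_inner_self_eq_norm_sq]
  simp only [inner_add_left, inner_add_right, real_inner_smul_left, real_inner_smul_right,
    norm_smul, Real.norm_eq_abs, mul_pow, sq_abs] at h₁ h₂ ⊢
  -- the step sizes (1 - t)/μ and t/μ make the gradient terms cancel
  linear_combination (norm := skip) h₁ + h₂ + (t * (1 - t) / μ) * hd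
  refine le_of_eq ?_
  field_simp
  ring

section Conjugate

variable {p : ℕ} {f : EuclR p → ℝ}

theorem le_fconj (w z : EuclR p) : ((⟪w, z⟫ - f w : ℝ) : EReal) ≤ fconj f z :=
  le_iSup (fun w : EuclR p => ((⟪w, z⟫ - f w : ℝ) : EReal)) w

theorem fconj_ne_bot (z : EuclR p) : fconj f z ≠ ⊥ :=
  ne_bot_of_le_ne_bot (EReal.coe_ne_bot _) (le_fconj 0 z)

theorem coe_toReal_fconj {z : EuclR p} (hz : fconj f z ≠ ⊤) :
    ((fconj f z).toReal : EReal) = fconj f z :=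
  EReal.coe_toReal hz (fconj_ne_bot z)

theorem le_toReal_fconj {z : EuclR p} (hz : fconj f z ≠ ⊤) (w : EuclR p) :
    ⟪w, z⟫ - f w ≤ (fconj f z).toReal := by
  rw [← EReal.coe_le_coe_iff, coe_toReal_fconj hz]
  exact le_fconj w z

theorem fconj_gradient_ne_top {g : EuclR p → EuclR p} (hf : ConvexOn ℝ univ f)
    (hg : ∀ y, HasGradientAt f (g y) y) (x : EuclR p) : fconj f (g x) ≠ ⊤ := by
  refine ne_top_of_le_ne_top (EReal.coe_ne_top (⟪x, g x⟫ - f x)) (iSup_le fun w => ?_)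
  have := hf.add_inner_gradient_le hg x w
  rw [inner_sub_right, real_inner_comm x, real_inner_comm w] at this
  exact EReal.coe_le_coe_iff.2 (by linarith)

theorem fconj_ne_top_of_forall_le {x z : EuclR p} {a : ℝ} {b : EuclR p → ℝ}
    (h : ∀ y, fconj f x + (a : EReal) ≤ fconj f y + (b y : EReal)) (hz : fconj f z ≠ ⊤) :
    fconj f x ≠ ⊤ := by
  intro hx
  have := h z
  rw [hx, EReal.top_add_coe, top_le_iff, ← coe_toReal_fconj hz, ← EReal.coe_add] at this
  exact EReal.coe_ne_top _ this

-- the (1/μ)-strong convexity of f* on its effective domain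
theorem fconj_combo_le {g : EuclR p → EuclR p} {μ : ℝ} (hμ : 0 < μ)
    (hdesc : ∀ x v, f (x + v) ≤ f x + ⟪g x, v⟫ + μ / 2 * ‖v‖ ^ 2)
    {z₁ z₂ : EuclR p} (h₁ : fconj f z₁ ≠ ⊤) (h₂ : fconj f z₂ ≠ ⊤) {t : ℝ} (ht₀ : 0 ≤ t)
    (ht₁ : t ≤ 1) :
    fconj f (t • z₁ + (1 - t) • z₂) ≤ ((t * (fconj f z₁).toReal + (1 - t) * (fconj f z₂).toReal
      - t * (1 - t) / (2 * μ) * ‖z₁ - z₂‖ ^ 2 : ℝ) : EReal) := by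
  refine iSup_le fun w => EReal.coe_le_coe_iff.2 ?_
  have := inner_sub_add_le_of_quadratic_upper_bound hμ hdesc ht₀ ht₁ z₁ z₂ w
  have := mul_le_mul_of_nonneg_left (le_toReal_fconj h₁ (w + ((1 - t) / μ) • (z₁ - z₂))) ht₀
  have := mul_le_mul_of_nonneg_left (le_toReal_fconj h₂ (w + (-(t / μ)) • (z₁ - z₂)))
    (sub_nonneg.2 ht₁)
  linarith

end Conjugate

open Filter Topology in
theorem add_le_of_forall_le_combo {E : Type*} [AddCommGroup E] [Module ℝ E] {F : E → ℝ}
    {x y : E} {c : ℝ} (hmin : ∀ t ∈ Ioo (0 : ℝ) 1, F x ≤ F (t • y + (1 - t) • x))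
    (hcombo : ∀ t ∈ Ioo (0 : ℝ) 1,
      F (t • y + (1 - t) • x) ≤ t * F y + (1 - t) * F x - t * (1 - t) * c) :
    F x + c ≤ F y := by
  have hlim : Tendsto (fun t : ℝ => F x + (1 - t) * c) (𝓝[>] 0) (𝓝 (F x + c)) := by
    have : Continuous (fun t : ℝ => F x + (1 - t) * c) := by fun_prop
    simpa using this.continuousWithinAt.tendsto (x := 0) (s := Ioi 0)
  refine le_of_tendsto hlim ?_
  filter_upwards [Ioo_mem_nhdsGT one_pos] with t ht
  have := (hmin t ht).trans (hcombo t ht)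
  have : t * (F x + (1 - t) * c) ≤ t * F y := by linarith
  exact le_of_mul_le_mul_left this ht.1

theorem norm_smul_add_one_sub_smul_sq {F : Type*} [NormedAddCommGroup F] [InnerProductSpace ℝ F]
    (a b : F) (t : ℝ) :
    ‖t • a + (1 - t) • b‖ ^ 2
      = t * ‖a‖ ^ 2 + (1 - t) * ‖b‖ ^ 2 - t * (1 - t) * ‖a - b‖ ^ 2 := by
  simp only [← real_inner_self_eq_norm_sq, inner_add_left, inner_add_right, inner_sub_left,
    inner_sub_right, real_inner_smul_left, real_inner_smul_right, real_inner_comm a b]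
  ring

theorem toReal_fconj_add_sq_growth {p : ℕ} {f : EuclR p → ℝ} {g : EuclR p → EuclR p}
    {F : Type*} [NormedAddCommGroup F] [InnerProductSpace ℝ F] {L : EuclR p →ₗ[ℝ] F}
    {c μ : ℝ} (hμ : 0 < μ) (hdesc : ∀ x v, f (x + v) ≤ f x + ⟪g x, v⟫ + μ / 2 * ‖v‖ ^ 2)
    {x y : EuclR p} (hx : fconj f x ≠ ⊤) (hy : fconj f y ≠ ⊤)
    (hmin : ∀ z, fconj f x + ((c * ‖L x‖ ^ 2 : ℝ) : EReal)
      ≤ fconj f z + ((c * ‖L z‖ ^ 2 : ℝ) : EReal)) :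
    (fconj f x).toReal + c * ‖L x‖ ^ 2 + (1 / (2 * μ) * ‖y - x‖ ^ 2 + c * ‖L (y - x)‖ ^ 2)
      ≤ (fconj f y).toReal + c * ‖L y‖ ^ 2 := by
  have hcombo {t : ℝ} (ht : t ∈ Ioo (0 : ℝ) 1) := fconj_combo_le hμ hdesc hy hx ht.1.le ht.2.le
  have hfin {t : ℝ} (ht : t ∈ Ioo (0 : ℝ) 1) : fconj f (t • y + (1 - t) • x) ≠ ⊤ :=
    ne_top_of_le_ne_top (EReal.coe_ne_top _) (hcombo ht)
  refine add_le_of_forall_le_combo (F := fun z => (fconj f z).toReal + c * ‖L z‖ ^ 2)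
    (fun t ht => ?_) (fun t ht => ?_)
  · have := hmin (t • y + (1 - t) • x)
    rwa [← coe_toReal_fconj hx, ← coe_toReal_fconj (hfin ht), ← EReal.coe_add,
      ← EReal.coe_add, EReal.coe_le_coe_iff] at this
  · have := hcombo ht
    rw [← coe_toReal_fconj (hfin ht), EReal.coe_le_coe_iff] at this
    simp only [map_add, map_smul, norm_smul_add_one_sub_smul_sq, ← map_sub]
    linear_combination this

theorem norm_apply_le_sSup_image_mul_norm {E F : Type*} [NormedAddCommGroup E] [NormedSpace ℝ E]
    [SeminormedAddCommGroup F] [NormedSpace ℝ F] (T : E →L[ℝ] F) {C : Set E} {x : E}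
    (hx : ‖x‖⁻¹ • x ∈ C) :
    ‖T x‖ ≤ sSup ((fun y => ‖T y‖) '' (C ∩ Metric.closedBall 0 1)) * ‖x‖ := by
  rcases eq_or_ne x 0 with rfl | hx₀
  · simp
  have hbdd : BddAbove ((fun y => ‖T y‖) '' (C ∩ Metric.closedBall 0 1)) := by
    refine ⟨‖T‖, forall_mem_image.2 fun y hy => ?_⟩
    have hy₁ : ‖y‖ ≤ 1 := mem_closedBall_zero_iff.1 hy.2
    simpa using T.le_opNorm_of_le hy₁
  have hunit : ‖x‖⁻¹ • x ∈ C ∩ Metric.closedBall 0 1 :=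
    ⟨hx, by simp [norm_smul, hx₀]⟩
  calc ‖T x‖ = ‖T (‖x‖⁻¹ • x)‖ * ‖x‖ := by
        rw [map_smul, norm_smul, norm_inv, norm_norm]
        field_simp
    _ ≤ _ := by gcongr; exact le_csSup hbdd (mem_image_of_mem _ hunit)

theorem norm_sq_eq_norm_sq_starProjection_add {F : Type*} [NormedAddCommGroup F]
    [InnerProductSpace ℝ F] (K : Submodule ℝ F) [K.HasOrthogonalProjection] (u : F) :
    ‖u‖ ^ 2 = ‖K.starProjection u‖ ^ 2 + ‖u - K.starProjection u‖ ^ 2 := by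
  simpa using Submodule.norm_sq_eq_add_norm_sq_starProjection u K

theorem sq_add_sq_le_perp_mul_perp_of_growth {E F : Type*} [NormedAddCommGroup E]
    [InnerProductSpace ℝ E] [NormedAddCommGroup F] [InnerProductSpace ℝ F] (L : E →ₗ[ℝ] F)
    (K : Submodule ℝ F) [K.HasOrthogonalProjection] {x y : E} {φx φy lam μ : ℝ} (hlam : 0 < lam)
    (h₁ : φx + 1 / (2 * lam) * ‖L x‖ ^ 2 + (1 / (2 * μ) * ‖y - x‖ ^ 2
      + 1 / (2 * lam) * ‖L (y - x)‖ ^ 2) ≤ φy + 1 / (2 * lam) * ‖L y‖ ^ 2)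
    (h₂ : φy + 1 / (2 * lam) * ‖K.starProjection (L y)‖ ^ 2 + (1 / (2 * μ) * ‖x - y‖ ^ 2
      + 1 / (2 * lam) * ‖K.starProjection (L (x - y))‖ ^ 2)
        ≤ φx + 1 / (2 * lam) * ‖K.starProjection (L x)‖ ^ 2)
    (hq : ‖L (y - x) - K.starProjection (L (y - x))‖ ^ 2 ≤ lam / (2 * μ) * ‖y - x‖ ^ 2) :
    lam / (2 * μ) * ‖y - x‖ ^ 2 + ‖L (y - x)‖ ^ 2
      ≤ ‖L (y - x) - K.starProjection (L (y - x))‖ * ‖L x - K.starProjection (L x)‖ := by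
  have hy : L y = L x + L (y - x) := by rw [map_sub, add_sub_cancel]
  have hxy : ‖K.starProjection (L (x - y))‖ = ‖K.starProjection (L (y - x))‖ := by
    rw [← norm_neg, ← map_neg, ← map_neg, neg_sub]
  rw [hy] at h₁ h₂
  rw [norm_sub_rev x y, hxy] at h₂
  set P := K.starProjection
  set u := L x
  set v := L (y - x)
  have hu : ‖u‖ ^ 2 = ‖P u‖ ^ 2 + ‖u - P u‖ ^ 2 := norm_sq_eq_norm_sq_starProjection_add K u
  have hv : ‖v‖ ^ 2 = ‖P v‖ ^ 2 + ‖v - P v‖ ^ 2 := norm_sq_eq_norm_sq_starProjection_add K v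
  have huv : ‖u + v‖ ^ 2 = ‖P (u + v)‖ ^ 2 + ‖u + v - P (u + v)‖ ^ 2 :=
    norm_sq_eq_norm_sq_starProjection_add K (u + v)
  have hcross : ‖(u + v) - P (u + v)‖ ^ 2
      = ‖u - P u‖ ^ 2 + 2 * ⟪u - P u, v - P v⟫ + ‖v - P v‖ ^ 2 := by
    rw [map_add, add_sub_add_comm, norm_add_sq_real]
  have hcs := real_inner_le_norm (u - P u) (v - P v)
  have hsum : 1 / μ * ‖y - x‖ ^ 2 + 1 / lam * ‖v‖ ^ 2
      ≤ 1 / lam * (‖u - P u‖ * ‖v - P v‖) + 1 / lam * ‖v - P v‖ ^ 2 := by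
    linear_combination h₁ + h₂ + (1 / lam) * hcs + (1 / (2 * lam)) * (hv + huv + hcross - hu)
  have hlam_inv : lam * (1 / lam) = 1 := by field_simp
  linear_combination lam * hsum + hq
    - (‖v‖ ^ 2 - ‖u - P u‖ * ‖v - P v‖ - ‖v - P v‖ ^ 2) * hlam_inv

theorem sqrt_four_mul_mul_le_of_mul_sq_add_sq_le {k δ α Z r : ℝ} (hk : 0 ≤ k) (hδ : 0 ≤ δ)
    (hZr : 0 ≤ Z * r) (h : k * δ ^ 2 + α ^ 2 ≤ Z * δ * r) : √(4 * k) * α ≤ Z * r := by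
  have hs : √(4 * k) ^ 2 = 4 * k := Real.sq_sqrt (by positivity)
  have hamgm : √(4 * k) * δ * α ≤ k * δ ^ 2 + α ^ 2 := by
    nlinarith [sq_nonneg (√(4 * k) * δ / 2 - α)]
  rcases hδ.eq_or_lt with rfl | hδ
  · nlinarith [sq_nonneg α]
  · exact le_of_mul_le_mul_right (by linarith) hδ

/-- the key intermediate inequality in the proof of the adaptive recovery
theorem, for Δ = y* - z*. -/
theorem key_dual_inequality (n d m : ℕ) (f : EuclR n → ℝ) (μ lam : ℝ)
    (hμ : 0 < μ) (hlam : 0 < lam)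
    (hconv : ConvexOn ℝ Set.univ f)
    (hdiff : ∀ x, HasGradientAt f (gradient f x) x)
    (hsmooth : ∀ x y, ‖gradient f y - gradient f x‖ ≤ μ * ‖y - x‖)
    (A : Matrix (Fin n) (Fin d) ℝ) (S : Matrix (Fin d) (Fin m) ℝ)
    (zs ys : EuclR n)
    (hzs : ∀ z, fconj f zs + ((1 / (2 * lam) * ‖matVec Aᵀ zs‖ ^ 2 : ℝ) : EReal)
        ≤ fconj f z + ((1 / (2 * lam) * ‖matVec Aᵀ z‖ ^ 2 : ℝ) : EReal))
    (hys : ∀ y, fconj f ys + ((1 / (2 * lam) * ‖projOn (ranM S) (matVec Aᵀ ys)‖ ^ 2 : ℝ) : EReal)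
        ≤ fconj f y + ((1 / (2 * lam) * ‖projOn (ranM S) (matVec Aᵀ y)‖ ^ 2 : ℝ) : EReal))
    (hcond : 2 * μ * (ZfVal f zs A S) ^ 2 ≤ lam) :
    (lam / (2 * μ)) * ‖ys - zs‖ ^ 2 + ‖matVec Aᵀ (ys - zs)‖ ^ 2
        ≤ ‖matVec Aᵀ (ys - zs) - projOn (ranM S) (matVec Aᵀ (ys - zs))‖
            * ‖matVec Aᵀ zs - projOn (ranM S) (matVec Aᵀ zs)‖ ∧
    Real.sqrt (2 * lam / μ) * ‖matVec Aᵀ (ys - zs)‖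
        ≤ ZfVal f zs A S * ‖matVec Aᵀ zs - projOn (ranM S) (matVec Aᵀ zs)‖ := by
  have hdesc := apply_add_le_of_lipschitz_gradient hdiff hsmooth
  have hfin := fconj_gradient_ne_top hconv hdiff 0
  have hzs_fin : fconj f zs ≠ ⊤ := fconj_ne_top_of_forall_le hzs hfin
  have hys_fin : fconj f ys ≠ ⊤ := fconj_ne_top_of_forall_le hys hfin
  have h₁ := toReal_fconj_add_sq_growth (L := Matrix.toEuclideanLin Aᵀ) hμ hdesc hzs_fin
    hys_fin hzs
  have h₂ := toReal_fconj_add_sq_growth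
    (L := (ranM S).starProjection.toLinearMap ∘ₗ Matrix.toEuclideanLin Aᵀ) hμ hdesc hys_fin
    hzs_fin hys
  set T := perpCLM (ranM S) ∘L matCLM Aᵀ
  have hZ : ‖T (ys - zs)‖ ≤ ZfVal f zs A S * ‖ys - zs‖ :=
    norm_apply_le_sSup_image_mul_norm T ⟨‖ys - zs‖⁻¹, by positivity, ys, hys_fin, rfl⟩
  have hZ₀ : 0 ≤ ZfVal f zs A S :=
    Real.sSup_nonneg (forall_mem_image.2 fun _ _ => norm_nonneg _)
  have hq : ‖T (ys - zs)‖ ^ 2 ≤ lam / (2 * μ) * ‖ys - zs‖ ^ 2 := by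
    calc ‖T (ys - zs)‖ ^ 2 ≤ ZfVal f zs A S ^ 2 * ‖ys - zs‖ ^ 2 := by
          rw [← mul_pow]; gcongr
      _ ≤ lam / (2 * μ) * ‖ys - zs‖ ^ 2 := by
          gcongr; rw [le_div_iff₀ (by positivity)]; linarith
  have key := sq_add_sq_le_perp_mul_perp_of_growth _ (ranM S) hlam h₁ h₂ hq
  refine ⟨key, ?_⟩
  rw [show 2 * lam / μ = 4 * (lam / (2 * μ)) by ring]
  exact sqrt_four_mul_mul_le_of_mul_sq_add_sq_le (by positivity) (norm_nonneg _)
    (mul_nonneg hZ₀ (norm_nonneg _)) (key.trans (mul_le_mul_of_nonneg_right hZ (norm_nonneg _)))
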